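/- arXiv:2003.08406 — 4 statements merged into one kernel-verified Lean document; each statement's English description precedes it below -/
import Mathlib

section
/- Let Z and V be subspaces of a finite-dimensional inner product space H. Define the overlap of V onto Z as μ(V→Z) = min over unit vectors z ∈ Z of ⟨z, P_V z⟩, where P_V is the orthogonal projection onto V. If μ(Z→V) > 0 and μ(V→Z) > 0, then μ(V→Z) = μ(Z→V). -/
noncomputable section
open scoped Classical

open ContinuousLinearMap

/-- Auxiliary: in finite dimensions the operator norm is attained on the unit sphere. -/
theorem ovl_aux_norm_attained {E F : Type} [NormedAddCommGroup E] [NormedSpace ℂ E]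
    [NormedAddCommGroup F] [NormedSpace ℂ F] [FiniteDimensional ℂ E] [Nontrivial E]
    (f : E →L[ℂ] F) : ∃ x : E, ‖x‖ = 1 ∧ ‖f x‖ = ‖f‖ := by
  obtain ⟨x0, hx0⟩ := exists_ne (0 : E)
  have hsph : (Metric.sphere (0 : E) 1).Nonempty := by
    refine ⟨‖x0‖⁻¹ • x0, ?_⟩
    simp [norm_smul, inv_mul_cancel₀ (norm_ne_zero_iff.mpr hx0)]
  obtain ⟨x, hxs, hmax⟩ := (isCompact_sphere (0 : E) 1).exists_isMaxOn hsph
    (f.continuous.norm.continuousOn)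
  have hx1 : ‖x‖ = 1 := by simpa using hxs
  refine ⟨x, hx1, le_antisymm (f.unit_le_opNorm x hx1.le) ?_⟩
  refine f.opNorm_le_bound (norm_nonneg _) fun y => ?_
  rcases eq_or_ne y 0 with rfl | hy
  · simp
  · have hyn : ‖y‖ ≠ 0 := norm_ne_zero_iff.mpr hy
    have hmem : ‖y‖⁻¹ • y ∈ Metric.sphere (0 : E) 1 := by
      simp [norm_smul, inv_mul_cancel₀ hyn]
    have hle : ‖f (‖y‖⁻¹ • y)‖ ≤ ‖f x‖ := hmax hmem
    have h2 : ‖f (‖y‖⁻¹ • y)‖ = ‖y‖⁻¹ * ‖f y‖ := by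
      simp [map_smul, norm_smul]
    rw [h2] at hle
    have h3 := mul_le_mul_of_nonneg_left hle (norm_nonneg y)
    rw [← mul_assoc, mul_inv_cancel₀ hyn, one_mul] at h3
    linarith [h3]

/-- Auxiliary: the infimum of `‖e z‖²` over unit vectors equals `‖e⁻¹‖⁻²`. -/
theorem ovl_aux_sInf_normsq {E F : Type} [NormedAddCommGroup E] [NormedSpace ℂ E]
    [NormedAddCommGroup F] [NormedSpace ℂ F] [FiniteDimensional ℂ E] [FiniteDimensional ℂ F]
    [Nontrivial E] [Nontrivial F]
    (e : E ≃L[ℂ] F) :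
    sInf {x : ℝ | ∃ z : E, ‖z‖ = 1 ∧ x = ‖e z‖ ^ 2} = (‖(e.symm : F →L[ℂ] E)‖⁻¹) ^ 2 := by
  set c : ℝ := ‖(e.symm : F →L[ℂ] E)‖ with hc
  have hcpos : 0 < c := by
    obtain ⟨x0, hx0⟩ := exists_ne (0 : E)
    have : (e.symm : F →L[ℂ] E) ≠ 0 := by
      intro h
      have : e.symm (e x0) = 0 := by
        have := congrFun (congrArg DFunLike.coe h) (e x0)
        simpa using this
      rw [e.symm_apply_apply] at this
      exact hx0 this
    exact norm_pos_iff.mpr this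
  have hlow : ∀ y ∈ {x : ℝ | ∃ z : E, ‖z‖ = 1 ∧ x = ‖e z‖ ^ 2}, c⁻¹ ^ 2 ≤ y := by
    rintro y ⟨z, hz, rfl⟩
    have h1 : (1 : ℝ) ≤ c * ‖e z‖ := by
      calc (1:ℝ) = ‖z‖ := hz.symm
        _ = ‖(e.symm : F →L[ℂ] E) (e z)‖ := by simp
        _ ≤ c * ‖e z‖ := (e.symm : F →L[ℂ] E).le_opNorm _
    have h2 : c⁻¹ ≤ ‖e z‖ := by
      rw [inv_le_iff_one_le_mul₀ hcpos] at *
      linarith [h1]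
    exact pow_le_pow_left₀ (by positivity) h2 2
  have hmem : c⁻¹ ^ 2 ∈ {x : ℝ | ∃ z : E, ‖z‖ = 1 ∧ x = ‖e z‖ ^ 2} := by
    obtain ⟨w, hw1, hw2⟩ := ovl_aux_norm_attained (e.symm : F →L[ℂ] E)
    refine ⟨c⁻¹ • e.symm w, ?_, ?_⟩
    · rw [norm_smul]
      simp only [Real.norm_eq_abs, abs_of_pos (inv_pos.mpr hcpos)]
      have : ‖(e.symm : F →L[ℂ] E) w‖ = c := hw2
      calc c⁻¹ * ‖e.symm w‖ = c⁻¹ * c := by rw [← this]; rfl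
        _ = 1 := inv_mul_cancel₀ hcpos.ne'
    · have : e (c⁻¹ • e.symm w) = c⁻¹ • w := by
        rw [show e (c⁻¹ • e.symm w) = c⁻¹ • e (e.symm w) from
          e.toContinuousLinearMap.map_smul_of_tower _ _, e.apply_symm_apply]
      rw [this, norm_smul]
      simp [abs_of_pos (inv_pos.mpr hcpos), hw1]
  exact le_antisymm (csInf_le ⟨c⁻¹ ^ 2, hlow⟩ hmem) (le_csInf ⟨_, hmem⟩ hlow)

variable {H : Type} [NormedAddCommGroup H] [InnerProductSpace ℂ H] [FiniteDimensional ℂ H]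

/-- The orthogonal projection onto the subspace `V`, as an endomorphism of `H`. -/
def Pj (V : Submodule ℂ H) : H →L[ℂ] H := V.subtypeL.comp (Submodule.orthogonalProjectionOnto V)

/-- The overlap `μ(V → Z)` of `V` onto `Z`: the minimum of `⟨z, P_V z⟩` over unit
vectors `z ∈ Z` (by convention `1` if `Z = 0`). -/
def ovl (V Z : Submodule ℂ H) : ℝ :=
  if Z = ⊥ then 1
  else sInf {x : ℝ | ∃ z ∈ Z, ‖z‖ = 1 ∧ x = ((inner ℂ z (Pj V z) : ℂ)).re}

/-- `V` covers `Z`: the orthogonal projection onto `Z` maps `V` onto all of `Z`. -/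
def Covers (V Z : Submodule ℂ H) : Prop := Submodule.map (Pj Z : H →ₗ[ℂ] H) V = Z

/-- The error ratio `Δ = δ/μ = tan²θ` of `V` onto `Z`. -/
def errRatio (V Z : Submodule ℂ H) : ℝ := (1 - ovl V Z) / ovl V Z

/-- A `σ`-AGSP for target space `Z`: commutes with `P_Z`, is a dilation on `Z`
(`P_Z K† K P_Z ≥ P_Z`), and satisfies `‖K P_{Z⊥}‖ ≤ √σ`. -/
def IsAGSP (σ : ℝ) (K : H →L[ℂ] H) (Z : Submodule ℂ H) : Prop :=
  K.comp (Pj Z) = (Pj Z).comp K ∧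
  ((Pj Z).comp ((adjoint K).comp (K.comp (Pj Z))) - Pj Z).IsPositive ∧
  ‖K.comp (Pj Zᗮ)‖ ≤ Real.sqrt σ

lemma ovl_aux_re_inner_Pj (W : Submodule ℂ H) (x : H) :
    ((inner ℂ x (Pj W x) : ℂ)).re = ‖(Submodule.orthogonalProjectionOnto W x : H)‖ ^ 2 := by
  set p : H := (Submodule.orthogonalProjectionOnto W x : H) with hp
  have hPj : Pj W x = p := rfl
  have h0 : (inner ℂ (x - p) p : ℂ) = 0 :=
    Submodule.starProjection_inner_eq_zero (K := W) x p (SetLike.coe_mem _)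
  rw [inner_sub_left, sub_eq_zero] at h0
  rw [hPj, h0, inner_self_eq_norm_sq_to_K]
  norm_cast

lemma ovl_aux_inner_proj_left (W : Submodule ℂ H) (x y : H) (hy : y ∈ W) :
    (inner ℂ ((Submodule.orthogonalProjectionOnto W x : H)) y : ℂ) = inner ℂ x y := by
  have h0 : (inner ℂ (x - (Submodule.orthogonalProjectionOnto W x : H)) y : ℂ) = 0 :=
    Submodule.starProjection_inner_eq_zero (K := W) x y hy
  rw [inner_sub_left, sub_eq_zero] at h0
  exact h0.symm

lemma ovl_aux_inner_proj_right (W : Submodule ℂ H) (x y : H) (hx : x ∈ W) :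
    (inner ℂ x ((Submodule.orthogonalProjectionOnto W y : H)) : ℂ) = inner ℂ x y := by
  have := ovl_aux_inner_proj_left W y x hx
  calc (inner ℂ x ((Submodule.orthogonalProjectionOnto W y : H)) : ℂ)
      = starRingEnd ℂ (inner ℂ ((Submodule.orthogonalProjectionOnto W y : H)) x) := (inner_conj_symm _ _).symm
    _ = starRingEnd ℂ (inner ℂ y x : ℂ) := by rw [this]
    _ = inner ℂ x y := inner_conj_symm _ _

lemma ovl_aux_nonneg (V Z : Submodule ℂ H) :
    ∀ x ∈ {x : ℝ | ∃ z ∈ Z, ‖z‖ = 1 ∧ x = ((inner ℂ z (Pj V z) : ℂ)).re}, (0:ℝ) ≤ x := by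
  rintro x ⟨z, _, _, rfl⟩
  rw [ovl_aux_re_inner_Pj]
  positivity

lemma ovl_aux_unit (W : Submodule ℂ H) (hW : W ≠ ⊥) : ∃ w ∈ W, ‖w‖ = 1 := by
  obtain ⟨w, hwW, hw0⟩ := Submodule.exists_mem_ne_zero_of_ne_bot hW
  exact ⟨‖w‖⁻¹ • w, W.smul_mem _ hwW, by
    simp [norm_smul, inv_mul_cancel₀ (norm_ne_zero_iff.mpr hw0)]⟩

/-- If the overlaps of `V` onto `Z` and of `Z` onto `V` are both positive, they are equal. -/
theorem ovl_symm (Z V : Submodule ℂ H) (h1 : 0 < ovl V Z) (h2 : 0 < ovl Z V) :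
    ovl V Z = ovl Z V := by
  by_cases hZ : Z = ⊥
  · by_cases hV : V = ⊥
    · simp [ovl, hZ, hV]
    · exfalso
      obtain ⟨v, hvV, hv1⟩ := ovl_aux_unit V hV
      have h0 : (0:ℝ) ∈ {x : ℝ | ∃ z ∈ V, ‖z‖ = 1 ∧ x = ((inner ℂ z (Pj Z z) : ℂ)).re} := by
        refine ⟨v, hvV, hv1, ?_⟩
        rw [ovl_aux_re_inner_Pj]
        subst hZ
        simp
      have : ovl Z V ≤ 0 := by
        rw [ovl, if_neg hV]
        exact csInf_le ⟨0, ovl_aux_nonneg Z V⟩ h0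
      linarith
  · by_cases hV : V = ⊥
    · exfalso
      obtain ⟨z, hzZ, hz1⟩ := ovl_aux_unit Z hZ
      have h0 : (0:ℝ) ∈ {x : ℝ | ∃ z ∈ Z, ‖z‖ = 1 ∧ x = ((inner ℂ z (Pj V z) : ℂ)).re} := by
        refine ⟨z, hzZ, hz1, ?_⟩
        rw [ovl_aux_re_inner_Pj]
        subst hV
        simp
      have : ovl V Z ≤ 0 := by
        rw [ovl, if_neg hZ]
        exact csInf_le ⟨0, ovl_aux_nonneg V Z⟩ h0
      linarith
    · -- main case
      haveI : Nontrivial Z := Submodule.nontrivial_iff_ne_bot.mpr hZ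
      haveI : Nontrivial V := Submodule.nontrivial_iff_ne_bot.mpr hV
      set A : Z →L[ℂ] V := (Submodule.orthogonalProjectionOnto V).comp Z.subtypeL with hA
      set B : V →L[ℂ] Z := (Submodule.orthogonalProjectionOnto Z).comp V.subtypeL with hB
      -- set descriptions
      have hsetV : {x : ℝ | ∃ z ∈ Z, ‖z‖ = 1 ∧ x = ((inner ℂ z (Pj V z) : ℂ)).re}
          = {x : ℝ | ∃ z : Z, ‖z‖ = 1 ∧ x = ‖A z‖ ^ 2} := by
        ext x
        constructor
        · rintro ⟨z, hzZ, hz1, rfl⟩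
          exact ⟨⟨z, hzZ⟩, hz1, by rw [ovl_aux_re_inner_Pj]; rfl⟩
        · rintro ⟨z, hz1, rfl⟩
          exact ⟨(z : H), z.2, hz1, by rw [ovl_aux_re_inner_Pj]; rfl⟩
      have hsetZ : {x : ℝ | ∃ z ∈ V, ‖z‖ = 1 ∧ x = ((inner ℂ z (Pj Z z) : ℂ)).re}
          = {x : ℝ | ∃ v : V, ‖v‖ = 1 ∧ x = ‖B v‖ ^ 2} := by
        ext x
        constructor
        · rintro ⟨v, hvV, hv1, rfl⟩
          exact ⟨⟨v, hvV⟩, hv1, by rw [ovl_aux_re_inner_Pj]; rfl⟩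
        · rintro ⟨v, hv1, rfl⟩
          exact ⟨(v : H), v.2, hv1, by rw [ovl_aux_re_inner_Pj]; rfl⟩
      have hV1 : ovl V Z = sInf {x : ℝ | ∃ z : Z, ‖z‖ = 1 ∧ x = ‖A z‖ ^ 2} := by
        rw [ovl, if_neg hZ, hsetV]
      have hZ1 : ovl Z V = sInf {x : ℝ | ∃ v : V, ‖v‖ = 1 ∧ x = ‖B v‖ ^ 2} := by
        rw [ovl, if_neg hV, hsetZ]
      -- injectivity of A and B
      have hinj : ∀ {E F : Type} [NormedAddCommGroup E] [NormedSpace ℂ E]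
          [NormedAddCommGroup F] [NormedSpace ℂ F] (T : E →L[ℂ] F),
          0 < sInf {x : ℝ | ∃ z : E, ‖z‖ = 1 ∧ x = ‖T z‖ ^ 2} → Function.Injective T := by
        intro E F _ _ _ _ T hT
        have hker : ∀ z : E, T z = 0 → z = 0 := by
          intro z hz
          by_contra hz0
          have hzn : ‖z‖ ≠ 0 := norm_ne_zero_iff.mpr hz0
          have hmem : (0:ℝ) ∈ {x : ℝ | ∃ z : E, ‖z‖ = 1 ∧ x = ‖T z‖ ^ 2} := by
            refine ⟨‖z‖⁻¹ • z, by simp [norm_smul, inv_mul_cancel₀ hzn], ?_⟩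
            rw [T.map_smul_of_tower, hz]
            simp
          have hbdd : BddBelow {x : ℝ | ∃ z : E, ‖z‖ = 1 ∧ x = ‖T z‖ ^ 2} :=
            ⟨0, by rintro x ⟨w, _, rfl⟩; positivity⟩
          have := csInf_le hbdd hmem
          linarith
        intro a b hab
        have : T (a - b) = 0 := by rw [map_sub, hab, sub_self]
        exact sub_eq_zero.mp (hker _ this)
      have h1' : 0 < sInf {x : ℝ | ∃ z : Z, ‖z‖ = 1 ∧ x = ‖A z‖ ^ 2} := hV1 ▸ h1
      have h2' : 0 < sInf {x : ℝ | ∃ v : V, ‖v‖ = 1 ∧ x = ‖B v‖ ^ 2} := hZ1 ▸ h2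
      have hAinj : Function.Injective A := hinj A h1'
      have hBinj : Function.Injective B := hinj B h2'
      have hrank : Module.finrank ℂ Z = Module.finrank ℂ V :=
        le_antisymm (LinearMap.finrank_le_finrank_of_injective (f := (A : Z →ₗ[ℂ] V)) hAinj)
          (LinearMap.finrank_le_finrank_of_injective (f := (B : V →ₗ[ℂ] Z)) hBinj)
      have hAsurj : Function.Surjective A :=
        (LinearMap.injective_iff_surjective_of_finrank_eq_finrank
          (f := (A : Z →ₗ[ℂ] V)) hrank).mp hAinj
      have hBsurj : Function.Surjective B :=
        (LinearMap.injective_iff_surjective_of_finrank_eq_finrank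
          (f := (B : V →ₗ[ℂ] Z)) hrank.symm).mp hBinj
      let e : Z ≃L[ℂ] V :=
        (LinearEquiv.ofBijective (A : Z →ₗ[ℂ] V) ⟨hAinj, hAsurj⟩).toContinuousLinearEquiv
      let f : V ≃L[ℂ] Z :=
        (LinearEquiv.ofBijective (B : V →ₗ[ℂ] Z) ⟨hBinj, hBsurj⟩).toContinuousLinearEquiv
      have he : ∀ z : Z, e z = A z := fun z => rfl
      have hf : ∀ v : V, f v = B v := fun v => rfl
      -- B is the adjoint of A
      have hBA : B = ContinuousLinearMap.adjoint A := by
        rw [ContinuousLinearMap.eq_adjoint_iff]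
        intro x y
        rw [Submodule.coe_inner, Submodule.coe_inner]
        show (inner ℂ ((Submodule.orthogonalProjectionOnto Z (x : H) : H)) (y : H) : ℂ)
            = inner ℂ (x : H) ((Submodule.orthogonalProjectionOnto V (y : H) : H))
        rw [ovl_aux_inner_proj_left Z (x : H) (y : H) y.2,
          ovl_aux_inner_proj_right V (x : H) (y : H) x.2]
      set A' : V →L[ℂ] Z := (e.symm : V →L[ℂ] Z) with hA'
      set B' : Z →L[ℂ] V := (f.symm : Z →L[ℂ] V) with hB'
      have hAA' : A.comp A' = ContinuousLinearMap.id ℂ V := by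
        ext v
        have : A (e.symm v) = v := by rw [← he]; exact e.apply_symm_apply v
        exact congrArg Subtype.val this
      have hBB' : B.comp B' = ContinuousLinearMap.id ℂ Z := by
        ext z
        have : B (f.symm z) = z := by rw [← hf]; exact f.apply_symm_apply z
        exact congrArg Subtype.val this
      have hadj : ContinuousLinearMap.adjoint A' = B' := by
        have hc1 : (ContinuousLinearMap.adjoint A').comp B = ContinuousLinearMap.id ℂ V := by
          rw [hBA, ← ContinuousLinearMap.adjoint_comp, hAA', ContinuousLinearMap.adjoint_id]
        calc ContinuousLinearMap.adjoint A'
            = (ContinuousLinearMap.adjoint A').comp (B.comp B') := by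
              rw [hBB', ContinuousLinearMap.comp_id]
          _ = ((ContinuousLinearMap.adjoint A').comp B).comp B' :=
              (ContinuousLinearMap.comp_assoc _ _ _).symm
          _ = B' := by rw [hc1, ContinuousLinearMap.id_comp]
      have hnorm : ‖A'‖ = ‖B'‖ := by
        rw [← hadj]
        exact (ContinuousLinearMap.adjoint.norm_map A').symm
      have hse : {x : ℝ | ∃ z : Z, ‖z‖ = 1 ∧ x = ‖A z‖ ^ 2}
          = {x : ℝ | ∃ z : Z, ‖z‖ = 1 ∧ x = ‖e z‖ ^ 2} := by
        ext x
        constructor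
        · rintro ⟨z, hz, rfl⟩; exact ⟨z, hz, by rw [he]⟩
        · rintro ⟨z, hz, rfl⟩; exact ⟨z, hz, by rw [he]⟩
      have hsf : {x : ℝ | ∃ v : V, ‖v‖ = 1 ∧ x = ‖B v‖ ^ 2}
          = {x : ℝ | ∃ v : V, ‖v‖ = 1 ∧ x = ‖f v‖ ^ 2} := by
        ext x
        constructor
        · rintro ⟨v, hv, rfl⟩; exact ⟨v, hv, by rw [hf]⟩
        · rintro ⟨v, hv, rfl⟩; exact ⟨v, hv, by rw [hf]⟩
      rw [hV1, hZ1, hse, hsf, ovl_aux_sInf_normsq e, ovl_aux_sInf_normsq f, ← hA', ← hB', hnorm]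
end
end

section
/- Let V₁, V₂ be subspaces of a finite-dimensional inner product space H and μ > 0. Then (the overlap of V₂ onto V₁ is at least μ, and the orthogonal projection P_{V₂} restricted to V₁ is surjective onto V₂) if and only if (the overlap of V₂ onto V₁ is at least μ and the overlap of V₁ onto V₂ is at least μ). -/
noncomputable section
open scoped Classical

open ContinuousLinearMap

variable {H : Type} [NormedAddCommGroup H] [InnerProductSpace ℂ H] [FiniteDimensional ℂ H]

lemma inner_Pj (V : Submodule ℂ H) (z : H) :
    (inner ℂ z (Pj V z) : ℂ) = (‖(Submodule.orthogonalProjectionOnto V z : H)‖ : ℂ)^2 := by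
  have h1 : (inner ℂ z (Pj V z) : ℂ) = inner ℂ (Submodule.orthogonalProjectionOnto V z : H) (Pj V z) := by
    have hmem := Submodule.sub_starProjection_mem_orthogonal (K := V) z
    have h0 : (inner ℂ (z - (Submodule.orthogonalProjectionOnto V z : H)) (Pj V z) : ℂ) = 0 :=
      Submodule.inner_left_of_mem_orthogonal (Submodule.coe_mem _) hmem
    have := inner_sub_left (𝕜 := ℂ) z (Submodule.orthogonalProjectionOnto V z : H) (Pj V z)
    rw [h0] at this
    linear_combination -this
  rw [h1]
  simp only [Pj, coe_comp', Function.comp_apply, Submodule.coe_subtypeL', Submodule.coe_subtype]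
  rw [inner_self_eq_norm_sq_to_K]; norm_num

lemma re_inner_Pj (V : Submodule ℂ H) (z : H) :
    ((inner ℂ z (Pj V z) : ℂ)).re = ‖(Submodule.orthogonalProjectionOnto V z : H)‖^2 := by
  rw [inner_Pj, ← Complex.ofReal_pow, Complex.ofReal_re]

lemma exists_unit {Z : Submodule ℂ H} (hZ : Z ≠ ⊥) : ∃ z ∈ Z, ‖z‖ = 1 := by
  obtain ⟨x, hx, hx0⟩ := Submodule.exists_mem_ne_zero_of_ne_bot hZ
  refine ⟨((‖x‖ : ℂ)⁻¹) • x, Z.smul_mem _ hx, ?_⟩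
  have : ‖x‖ ≠ 0 := norm_ne_zero_iff.2 hx0
  simp [norm_smul, this]

lemma ovl_bddBelow (V Z : Submodule ℂ H) :
    BddBelow {x : ℝ | ∃ z ∈ Z, ‖z‖ = 1 ∧ x = ((inner ℂ z (Pj V z) : ℂ)).re} := by
  refine ⟨0, ?_⟩
  rintro x ⟨z, _, _, rfl⟩
  rw [re_inner_Pj]
  positivity

lemma ovl_le_of_unit (V : Submodule ℂ H) {Z : Submodule ℂ H} {z : H} (hz : z ∈ Z)
    (hn : ‖z‖ = 1) : ovl V Z ≤ ‖(Submodule.orthogonalProjectionOnto V z : H)‖^2 := by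
  have hZ : Z ≠ ⊥ := by
    rintro rfl
    simp only [Submodule.mem_bot] at hz
    rw [hz] at hn; simp at hn
  rw [ovl, if_neg hZ]
  exact csInf_le (ovl_bddBelow V Z) ⟨z, hz, hn, (re_inner_Pj V z).symm⟩

lemma le_ovl {μ : ℝ} (V Z : Submodule ℂ H) (hμ1 : μ ≤ 1)
    (h : ∀ z ∈ Z, ‖z‖ = 1 → μ ≤ ‖(Submodule.orthogonalProjectionOnto V z : H)‖^2) : μ ≤ ovl V Z := by
  by_cases hZ : Z = ⊥
  · rw [ovl, if_pos hZ]; exact hμ1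
  · rw [ovl, if_neg hZ]
    obtain ⟨z, hz, hn⟩ := exists_unit hZ
    refine le_csInf ⟨_, z, hz, hn, rfl⟩ ?_
    rintro x ⟨w, hw, hwn, rfl⟩
    rw [re_inner_Pj]
    exact h w hw hwn

lemma norm_proj_le (V : Submodule ℂ H) (z : H) :
    ‖(Submodule.orthogonalProjectionOnto V z : H)‖ ≤ ‖z‖ := by
  have := (Submodule.orthogonalProjectionOnto V).le_opNorm z
  have h2 := Submodule.orthogonalProjectionOnto_norm_le V
  calc ‖(Submodule.orthogonalProjectionOnto V z : H)‖ ≤ ‖Submodule.orthogonalProjectionOnto V‖ * ‖z‖ := this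
    _ ≤ 1 * ‖z‖ := by
        apply mul_le_mul_of_nonneg_right h2 (norm_nonneg z)
    _ = ‖z‖ := one_mul _

/-- Symmetry lemma: `V₁` overlaps `V₂`... : (overlap of `V₂` onto `V₁` is at least `μ`
and `V₁` covers `V₂`) iff the two subspaces are mutually `μ`-overlapping. -/
theorem symmetry_lemma (V₁ V₂ : Submodule ℂ H) (μ : ℝ) (hμ : 0 < μ) :
    (μ ≤ ovl V₂ V₁ ∧ Covers V₁ V₂) ↔ (μ ≤ ovl V₂ V₁ ∧ μ ≤ ovl V₁ V₂) := by
  constructor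
  · rintro ⟨h1, h2⟩
    refine ⟨h1, ?_⟩
    have hμ1 : μ ≤ 1 := by
      by_cases hb : V₁ = ⊥
      · simpa [ovl, hb] using h1
      · obtain ⟨z, hz, hn⟩ := exists_unit hb
        have hle := ovl_le_of_unit V₂ hz hn
        have hle2 := norm_proj_le V₂ z
        rw [hn] at hle2
        nlinarith [norm_nonneg (Submodule.orthogonalProjectionOnto V₂ z : H)]
    refine le_ovl V₁ V₂ hμ1 ?_
    intro z hz hn
    obtain ⟨v, hv1, hv2⟩ : ∃ v ∈ V₁, Pj V₂ v = z := by
      rw [Covers] at h2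
      rw [← h2] at hz
      exact hz
    have hv0 : v ≠ 0 := by
      rintro rfl
      rw [map_zero] at hv2
      rw [← hv2] at hn; simp at hn
    have hvn : ‖v‖ ≠ 0 := norm_ne_zero_iff.2 hv0
    -- bound on ‖v‖ from the overlap of V₂ onto V₁
    have key : μ * ‖v‖^2 ≤ 1 := by
      have hmem : ((‖v‖ : ℂ)⁻¹) • v ∈ V₁ := V₁.smul_mem _ hv1
      have hunit : ‖((‖v‖ : ℂ)⁻¹) • v‖ = 1 := by simp [norm_smul, hvn]
      have h3 := ovl_le_of_unit V₂ hmem hunit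
      have h4 : ‖(Submodule.orthogonalProjectionOnto V₂ (((‖v‖ : ℂ)⁻¹) • v) : H)‖ = ‖v‖⁻¹ := by
        have : (Submodule.orthogonalProjectionOnto V₂ (((‖v‖ : ℂ)⁻¹) • v) : H)
            = ((‖v‖ : ℂ)⁻¹) • (Submodule.orthogonalProjectionOnto V₂ v : H) := by
          rw [map_smul]; rfl
        have hPv : (Submodule.orthogonalProjectionOnto V₂ v : H) = z := hv2
        rw [this, hPv, norm_smul, hn]
        simp
      rw [h4] at h3
      have h5 : μ ≤ (‖v‖⁻¹)^2 := le_trans h1 h3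
      have : (0:ℝ) < ‖v‖ := lt_of_le_of_ne (norm_nonneg v) (Ne.symm hvn)
      rw [inv_pow] at h5
      calc μ * ‖v‖^2 ≤ (‖v‖^2)⁻¹ * ‖v‖^2 := by
            apply mul_le_mul_of_nonneg_right h5 (by positivity)
        _ = 1 := inv_mul_cancel₀ (by positivity)
    -- ⟨v, z⟩ = 1
    have hinner : (inner ℂ v z : ℂ) = 1 := by
      have := inner_Pj V₂ v
      rw [hv2] at this
      have hPv : (Submodule.orthogonalProjectionOnto V₂ v : H) = z := hv2
      rw [hPv, hn] at this
      simpa using this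
    -- ⟨P₁ z, v⟩ = ⟨z, v⟩
    have hproj : (inner ℂ (Submodule.orthogonalProjectionOnto V₁ z : H) v : ℂ) = inner ℂ z v := by
      have hmem := Submodule.sub_starProjection_mem_orthogonal (K := V₁) z
      have h0 : (inner ℂ (z - (Submodule.orthogonalProjectionOnto V₁ z : H)) v : ℂ) = 0 :=
        Submodule.inner_left_of_mem_orthogonal hv1 hmem
      have := inner_sub_left (𝕜 := ℂ) z (Submodule.orthogonalProjectionOnto V₁ z : H) v
      rw [h0] at this
      linear_combination this
    have hzv : (inner ℂ z v : ℂ) = 1 := by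
      rw [← inner_conj_symm, hinner]; simp
    have hcs : (1:ℝ) ≤ ‖(Submodule.orthogonalProjectionOnto V₁ z : H)‖ * ‖v‖ := by
      have := norm_inner_le_norm (𝕜 := ℂ) (Submodule.orthogonalProjectionOnto V₁ z : H) v
      rw [hproj, hzv] at this
      simpa using this
    have hq := norm_nonneg (Submodule.orthogonalProjectionOnto V₁ z : H)
    have hb2 : (0:ℝ) < ‖v‖^2 := by positivity
    have h6 : (1:ℝ) ≤ (‖(Submodule.orthogonalProjectionOnto V₁ z : H)‖ * ‖v‖)^2 := by nlinarith
    have h7 : μ * ‖v‖^2 ≤ ‖(Submodule.orthogonalProjectionOnto V₁ z : H)‖^2 * ‖v‖^2 := by nlinarith [mul_pow ‖(Submodule.orthogonalProjectionOnto V₁ z : H)‖ ‖v‖ 2]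
    exact le_of_mul_le_mul_right h7 hb2
  · rintro ⟨h1, h2⟩
    refine ⟨h1, ?_⟩
    rw [Covers]
    apply le_antisymm
    · rintro x ⟨y, _, rfl⟩
      exact Submodule.coe_mem _
    · -- V₂ ≤ map (Pj V₂) V₁
      set T : V₂ →ₗ[ℂ] V₂ :=
        (Submodule.orthogonalProjectionOnto V₂).toLinearMap ∘ₗ (Pj V₁).toLinearMap ∘ₗ V₂.subtype with hT
      have hinj : Function.Injective T := by
        rw [← LinearMap.ker_eq_bot, Submodule.eq_bot_iff]
        rintro ⟨z, hz⟩ hker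
        simp only [LinearMap.mem_ker, hT, LinearMap.comp_apply, Submodule.subtype_apply,
          ContinuousLinearMap.coe_coe] at hker
        have hz0 : ((Submodule.orthogonalProjectionOnto V₂ (Pj V₁ z)) : H) = 0 := by
          rw [hker]; rfl
        -- then ⟨z, Pj V₁ z⟩ = 0
        have hi : (inner ℂ z (Pj V₁ z) : ℂ) = 0 := by
          have hmem := Submodule.sub_starProjection_mem_orthogonal (K := V₂) (Pj V₁ z)
          have h0 : (inner ℂ z ((Pj V₁ z) - (Submodule.orthogonalProjectionOnto V₂ (Pj V₁ z) : H)) : ℂ) = 0 :=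
            Submodule.inner_right_of_mem_orthogonal hz hmem
          rw [hz0, sub_zero] at h0
          exact h0
        have hre : ‖(Submodule.orthogonalProjectionOnto V₁ z : H)‖^2 = 0 := by
          rw [← re_inner_Pj, hi]; rfl
        by_contra hz0'
        have hzz : z ≠ 0 := by
          intro h; apply hz0'; ext; exact h
        have hzn : ‖z‖ ≠ 0 := norm_ne_zero_iff.2 hzz
        have hmem2 : ((‖z‖ : ℂ)⁻¹) • z ∈ V₂ := V₂.smul_mem _ hz
        have hunit : ‖((‖z‖ : ℂ)⁻¹) • z‖ = 1 := by simp [norm_smul, hzn]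
        have h3 := ovl_le_of_unit V₁ hmem2 hunit
        have h4 : ‖(Submodule.orthogonalProjectionOnto V₁ (((‖z‖ : ℂ)⁻¹) • z) : H)‖
            = ‖z‖⁻¹ * ‖(Submodule.orthogonalProjectionOnto V₁ z : H)‖ := by
          have : (Submodule.orthogonalProjectionOnto V₁ (((‖z‖ : ℂ)⁻¹) • z) : H)
              = ((‖z‖ : ℂ)⁻¹) • (Submodule.orthogonalProjectionOnto V₁ z : H) := by
            rw [map_smul]; rfl
          rw [this, norm_smul]; simp
        rw [h4] at h3
        have := le_trans h2 h3
        rw [mul_pow] at this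
        rw [hre] at this
        simp at this
        linarith
      have hsurj : Function.Surjective T := LinearMap.injective_iff_surjective.1 hinj
      intro z hz
      obtain ⟨w, hw⟩ := hsurj ⟨z, hz⟩
      refine ⟨Pj V₁ (w : H), Submodule.coe_mem _, ?_⟩
      have : ((T w : V₂) : H) = z := by rw [hw]
      simp only [hT, LinearMap.comp_apply, Submodule.subtype_apply,
        ContinuousLinearMap.coe_coe] at this
      rw [← this]
      rfl
end
end

section
/- Let Z, V be subspaces of a finite-dimensional Hilbert space H such that V covers Z with error ratio Δ = (1−μ)/μ where μ > 0 is the overlap of V onto Z. Then for every z ∈ Z, the lift L z ∈ V decomposes as L z = z + P_{Z⊥}(L z), and the operator norm of P_{Z⊥} ∘ L is at most √Δ, where L is the lifting operator from Z to V. -/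
noncomputable section
open scoped Classical

open ContinuousLinearMap

set_option maxHeartbeats 2000000

variable {H : Type} [NormedAddCommGroup H] [InnerProductSpace ℂ H] [FiniteDimensional ℂ H]

/-- The transition map `M : V → Z`, the orthogonal projection onto `Z` restricted to `V`. -/
def Mmap (V Z : Submodule ℂ H) : V →L[ℂ] Z := (Submodule.orthogonalProjectionOnto Z).comp V.subtypeL

/-- The lifting operator `L = M†(M M†)⁻¹ : Z → V`. -/
def liftOp (V Z : Submodule ℂ H) : Z →L[ℂ] V :=
  (adjoint (Mmap V Z)).comp (Ring.inverse ((Mmap V Z).comp (adjoint (Mmap V Z))))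

lemma pj_inner_eq (V Z : Submodule ℂ H) (u : Z) :
    (inner ℂ (u:H) (Pj V (u:H)) : ℂ).re = ‖adjoint (Mmap V Z) u‖^2 := by
  have hadj : adjoint (Mmap V Z) u = Submodule.orthogonalProjectionOnto V (u:H) := by
    rw [Mmap, adjoint_comp, Submodule.adjoint_subtypeL, Submodule.adjoint_orthogonalProjection]
    rfl
  rw [hadj]
  have key : (inner ℂ (u:H) (Pj V (u:H)) : ℂ)
      = inner ℂ ((Submodule.orthogonalProjectionOnto V (u:H)):H) ((Submodule.orthogonalProjectionOnto V (u:H)):H) := by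
    have h0 : inner ℂ ((u:H) - ((Submodule.orthogonalProjectionOnto V (u:H)):H)) (((Submodule.orthogonalProjectionOnto V (u:H)):H)) = 0 :=
      Submodule.starProjection_inner_eq_zero (𝕜 := ℂ) (K := V) (u:H)
      ((Submodule.orthogonalProjectionOnto V (u:H)):H) (Submodule.orthogonalProjectionOnto V (u:H)).2
    have h2 : (inner ℂ (u:H) (((Submodule.orthogonalProjectionOnto V (u:H)):H)) : ℂ)
        = inner ℂ ((u:H) - ((Submodule.orthogonalProjectionOnto V (u:H)):H)) (((Submodule.orthogonalProjectionOnto V (u:H)):H))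
          + inner ℂ ((Submodule.orthogonalProjectionOnto V (u:H)):H) ((Submodule.orthogonalProjectionOnto V (u:H)):H) := by
      rw [inner_sub_left]; ring
    rw [Pj, comp_apply, Submodule.subtypeL_apply, h2, h0, zero_add]
  rw [key]
  exact inner_self_eq_norm_sq (𝕜 := ℂ) ((Submodule.orthogonalProjectionOnto V (u:H)):H)

lemma A_inner_eq (V Z : Submodule ℂ H) (u : Z) :
    (inner ℂ u (((Mmap V Z).comp (adjoint (Mmap V Z))) u) : ℂ).re = ‖adjoint (Mmap V Z) u‖^2 := by
  rw [comp_apply, ← adjoint_inner_left (Mmap V Z) (adjoint (Mmap V Z) u) u]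
  exact inner_self_eq_norm_sq (𝕜 := ℂ) _

lemma adjoint_Mmap_apply (V Z : Submodule ℂ H) (u : Z) :
    adjoint (Mmap V Z) u = Submodule.orthogonalProjectionOnto V (u:H) := by
  rw [Mmap, adjoint_comp, Submodule.adjoint_subtypeL, Submodule.adjoint_orthogonalProjection]
  rfl

lemma ovl_le_of_unit_s10 (V Z : Submodule ℂ H) (hZ : Z ≠ ⊥) (u : Z) (hu : ‖(u:H)‖ = 1) :
    ovl V Z ≤ ‖adjoint (Mmap V Z) u‖^2 := by
  rw [ovl, if_neg hZ]
  exact csInf_le (ovl_bddBelow V Z) ⟨(u:H), u.2, hu, (pj_inner_eq V Z u).symm⟩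

/-- If `V` covers `Z` with error ratio `Δ`, then for every `z ∈ Z` the lift decomposes
as `L z = z + P_{Z⊥}(L z)`, and `‖P_{Z⊥} ∘ L‖ ≤ √Δ`. -/
theorem lift_decomposition (Z V : Submodule ℂ H) (hcov : Covers V Z) (hμ : 0 < ovl V Z) :
    (∀ z : Z, ((liftOp V Z z : H)) = (z : H) + Pj Zᗮ ((liftOp V Z z : H))) ∧
    ‖(Pj Zᗮ).comp (V.subtypeL.comp (liftOp V Z))‖ ≤ Real.sqrt (errRatio V Z) := by
  set M := Mmap V Z with hMdef
  set A := M.comp (adjoint M) with hAdef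
  -- lower bound: μ ‖u‖² ≤ ‖M† u‖²
  have hlow : ∀ u : Z, ovl V Z * ‖u‖^2 ≤ ‖adjoint M u‖^2 := by
    intro u
    by_cases hu : u = 0
    · simp [hu]
    · have hZ : Z ≠ ⊥ := by
        rw [Submodule.ne_bot_iff]
        exact ⟨(u:H), u.2, by simpa using hu⟩
      have hcn : ‖u‖ ≠ 0 := by simpa using hu
      set u' : Z := ((‖u‖ : ℂ))⁻¹ • u with hu'def
      have hu'norm : ‖(u':H)‖ = 1 := by
        rw [hu'def]
        push_cast [Submodule.coe_smul, norm_smul]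
        simp only [norm_inv, Complex.norm_real, Real.norm_eq_abs, abs_norm]
        exact inv_mul_cancel₀ hcn
      have h1 := ovl_le_of_unit_s10 V Z hZ u' hu'norm
      have h2 : ‖adjoint M u'‖^2 = (‖u‖⁻¹)^2 * ‖adjoint M u‖^2 := by
        rw [hu'def, map_smul, norm_smul]
        simp [mul_pow]
      rw [h2] at h1
      have hcpos : (0:ℝ) < ‖u‖ := lt_of_le_of_ne (norm_nonneg _) (Ne.symm hcn)
      have := mul_le_mul_of_nonneg_left h1 (le_of_lt (by positivity : (0:ℝ) < ‖u‖^2))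
      calc ovl V Z * ‖u‖^2 = ‖u‖^2 * ovl V Z := by ring
        _ ≤ ‖u‖^2 * ((‖u‖⁻¹)^2 * ‖adjoint M u‖^2) := this
        _ = ‖adjoint M u‖^2 := by
            rw [← mul_assoc, ← mul_pow, mul_inv_cancel₀ hcn]; norm_num
  have hlow' : ∀ u : Z, ovl V Z * ‖u‖^2 ≤ (inner ℂ u (A u) : ℂ).re := by
    intro u; rw [hAdef, A_inner_eq V Z u]; exact hlow u
  -- A is invertible
  have hinj : Function.Injective A := by
    intro a b hab
    have h0 : A (a - b) = 0 := by rw [map_sub, hab, sub_self]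
    have := hlow' (a - b)
    rw [h0, inner_zero_right] at this
    simp only [Complex.zero_re] at this
    have hs : ‖a - b‖^2 ≤ 0 := by
      by_contra hc
      push_neg at hc
      exact absurd this (not_le.mpr (mul_pos hμ hc))
    have hs2 : ‖a - b‖^2 = 0 := le_antisymm hs (sq_nonneg _)
    have hs3 : ‖a - b‖ = 0 := by
      have := pow_eq_zero_iff (n := 2) (by norm_num) |>.mp hs2
      exact this
    rwa [norm_eq_zero, sub_eq_zero] at hs3
  have hunit : IsUnit A := by
    rw [ContinuousLinearMap.isUnit_iff_bijective]
    have hinjL : Function.Injective (A : Z →ₗ[ℂ] Z) := hinj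
    exact ⟨hinj, LinearMap.injective_iff_surjective.mp hinjL⟩
  have hAinv : ∀ z : Z, A (Ring.inverse A z) = z := by
    intro z
    have h := Ring.mul_inverse_cancel A hunit
    calc A (Ring.inverse A z) = (A * Ring.inverse A) z := rfl
      _ = z := by rw [h]; rfl
  have hML : ∀ z : Z, M (liftOp V Z z) = z := fun z => hAinv z
  have hproj : ∀ z : Z, Submodule.orthogonalProjectionOnto Z ((liftOp V Z z : V) : H) = z := fun z => hML z
  have part1 : ∀ z : Z, ((liftOp V Z z : H)) = (z : H) + Pj Zᗮ ((liftOp V Z z : H)) := by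
    intro z
    conv_lhs => rw [← Submodule.starProjection_add_starProjection_orthogonal (K := Z)
      ((liftOp V Z z : V) : H)]
    rw [Submodule.starProjection_apply, hproj z]
    rfl
  refine ⟨part1, ?_⟩
  refine opNorm_le_bound _ (Real.sqrt_nonneg _) fun z => ?_
  by_cases hz : z = 0
  · simp [hz]
  · have hZ : Z ≠ ⊥ := by
      rw [Submodule.ne_bot_iff]
      exact ⟨(z:H), z.2, by simpa using hz⟩
    -- μ ≤ 1
    have hμ1 : ovl V Z ≤ 1 := by
      have hcn : ‖z‖ ≠ 0 := by simpa using hz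
      set z' : Z := ((‖z‖ : ℂ))⁻¹ • z with hz'def
      have hz'norm : ‖(z':H)‖ = 1 := by
        rw [hz'def]
        push_cast [Submodule.coe_smul, norm_smul]
        simp only [norm_inv, Complex.norm_real, Real.norm_eq_abs, abs_norm]
        exact inv_mul_cancel₀ hcn
      refine le_trans (ovl_le_of_unit_s10 V Z hZ z' hz'norm) ?_
      rw [adjoint_Mmap_apply V Z z']
      have hpy := Submodule.norm_sq_eq_add_norm_sq_projection (z':H) V
      have h2 : ‖Submodule.orthogonalProjectionOnto V (z':H)‖^2 ≤ ‖(z':H)‖^2 := by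
        nlinarith [sq_nonneg ‖Submodule.orthogonalProjectionOnto Vᗮ (z':H)‖]
      calc ‖Submodule.orthogonalProjectionOnto V (z':H)‖^2 ≤ ‖(z':H)‖^2 := h2
        _ = 1 := by rw [hz'norm]; norm_num
    have hΔ0 : 0 ≤ errRatio V Z := div_nonneg (by linarith) (le_of_lt hμ)
    set u : Z := Ring.inverse A z with hudef
    have hw : liftOp V Z z = adjoint M u := rfl
    have hAu : A u = z := hAinv z
    -- norm of w
    have hwn : ‖adjoint M u‖^2 = (inner ℂ u z : ℂ).re := by
      rw [← A_inner_eq V Z u, ← hAdef, hAu]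
    have hu1 : ovl V Z * ‖u‖^2 ≤ (inner ℂ u z : ℂ).re := by
      have := hlow' u; rwa [hAu] at this
    have hu2 : (inner ℂ u z : ℂ).re ≤ ‖u‖ * ‖z‖ := by
      calc (inner ℂ u z : ℂ).re ≤ ‖(inner ℂ u z : ℂ)‖ := Complex.re_le_norm _
        _ ≤ ‖u‖ * ‖z‖ := norm_inner_le_norm u z
    have hun : ‖u‖ ≤ ‖z‖ / ovl V Z := by
      rcases eq_or_lt_of_le (norm_nonneg u) with h0 | h0
      · rw [← h0]; positivity
      · rw [le_div_iff₀ hμ]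
        have : ovl V Z * ‖u‖^2 ≤ ‖u‖ * ‖z‖ := le_trans hu1 hu2
        nlinarith
    have hwb : ‖adjoint M u‖^2 ≤ ‖z‖^2 / ovl V Z := by
      rw [hwn]
      calc (inner ℂ u z : ℂ).re ≤ ‖u‖ * ‖z‖ := hu2
        _ ≤ (‖z‖ / ovl V Z) * ‖z‖ := by
            apply mul_le_mul_of_nonneg_right hun (norm_nonneg _)
        _ = ‖z‖^2 / ovl V Z := by ring
    -- Pythagoras
    have hpy := Submodule.norm_sq_eq_add_norm_sq_projection (((liftOp V Z z : V)) : H) Z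
    rw [hproj z] at hpy
    have hnormw : ‖(((liftOp V Z z : V)) : H)‖ = ‖adjoint M u‖ := by rw [hw]; rfl
    rw [hnormw] at hpy
    have hT2 : ‖Submodule.orthogonalProjectionOnto Zᗮ (((liftOp V Z z : V)) : H)‖^2
        ≤ errRatio V Z * ‖z‖^2 := by
      have h3 : ‖Submodule.orthogonalProjectionOnto Zᗮ (((liftOp V Z z : V)) : H)‖^2
          = ‖adjoint M u‖^2 - ‖z‖^2 := by linarith
      rw [h3, errRatio]
      have : ‖z‖^2 / ovl V Z - ‖z‖^2 = (1 - ovl V Z) / ovl V Z * ‖z‖^2 := by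
        field_simp
      linarith [hwb, this.ge, this.le]
    have hTeq : ‖((Pj Zᗮ).comp (V.subtypeL.comp (liftOp V Z))) z‖
        = ‖Submodule.orthogonalProjectionOnto Zᗮ (((liftOp V Z z : V)) : H)‖ := rfl
    rw [hTeq]
    have := Real.sqrt_le_sqrt hT2
    rwa [Real.sqrt_sq (norm_nonneg _), Real.sqrt_mul hΔ0, Real.sqrt_sq (norm_nonneg _)] at this
end
end

section
/- Let Λ = (λ_1, λ_2, ...) be a sequence in [0,1] with Σ_i λ_i ≤ 1, and let I_0, I_1, I_2, ... be a partition of the positive integers into finite sets with |I_n| ≥ 3 for all n, and Σ_{i∈I_n} λ_i ≤ γ_n for given γ_n ∈ [0,1] (n ≥ 1). Then the Shannon entropy S(Λ) = Σ_i λ_i log(1/λ_i) satisfies S(Λ) ≤ log|I_0| + Σ_{n≥1} γ_n log|I_n| + Σ_{n≥1} h(γ_n), where h(x) = x log(1/x). -/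
noncomputable section

/-- The entropy function `h(x) = x log(1/x)` (natural logarithm), with `h(0) = 0`. -/
def hEnt (x : ℝ) : ℝ := x * Real.log (1 / x)

lemma hEnt_eq : hEnt = Real.negMulLog := by
  funext x
  simp [hEnt, Real.negMulLog, one_div, Real.log_inv]

lemma hEnt_nonneg {x : ℝ} (h0 : 0 ≤ x) (h1 : x ≤ 1) : 0 ≤ hEnt x := by
  rw [hEnt_eq]; exact Real.negMulLog_nonneg h0 h1

lemma hEnt_monoOn : MonotoneOn hEnt (Set.Icc 0 (Real.exp (-1))) := by
  rw [hEnt_eq]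
  have hconv : Convex ℝ (Set.Icc (0 : ℝ) (Real.exp (-1))) := convex_Icc _ _
  refine StrictMonoOn.monotoneOn ?_
  apply strictMonoOn_of_deriv_pos hconv (Real.continuous_negMulLog.continuousOn)
  intro x hx
  rw [interior_Icc] at hx
  rw [Real.deriv_negMulLog (ne_of_gt hx.1)]
  have : Real.log x < -1 := by
    have := Real.log_lt_log hx.1 hx.2
    rwa [Real.log_exp] at this
  linarith

lemma exp_neg_one_ge : (1 : ℝ) / 3 ≤ Real.exp (-1) := by
  rw [Real.exp_neg]
  rw [div_le_iff₀ (by norm_num), inv_mul_eq_div, le_div_iff₀ (Real.exp_pos 1)]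
  nlinarith [Real.exp_one_lt_d9]

lemma key_bound (I : Finset ℕ) (hI : 3 ≤ I.card) (lam : ℕ → ℝ)
    (h0 : ∀ i ∈ I, 0 ≤ lam i) {γ : ℝ} (hγ1 : γ ≤ 1)
    (hs : ∑ i ∈ I, lam i ≤ γ) :
    ∑ i ∈ I, hEnt (lam i) ≤ γ * Real.log I.card + hEnt γ := by
  set N : ℝ := (I.card : ℝ) with hN
  have hN3 : (3 : ℝ) ≤ N := by rw [hN]; exact_mod_cast hI
  have hNpos : (0 : ℝ) < N := by linarith
  set s : ℝ := ∑ i ∈ I, lam i with hsdef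
  have hs0 : 0 ≤ s := Finset.sum_nonneg h0
  have hγ0 : 0 ≤ γ := le_trans hs0 hs
  -- Jensen
  have jensen : ∑ i ∈ I, (1 / N) • Real.negMulLog (lam i) ≤
      Real.negMulLog (∑ i ∈ I, (1 / N) • lam i) := by
    apply Real.concaveOn_negMulLog.le_map_sum
    · intro i _; positivity
    · rw [Finset.sum_const, nsmul_eq_mul]
      field_simp
      exact hN.symm
    · intro i hi; exact h0 i hi
  have hsum1 : ∑ i ∈ I, (1 / N) • lam i = s / N := by
    simp only [smul_eq_mul, ← Finset.mul_sum, ← hsdef]; ring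
  have hsum2 : ∑ i ∈ I, (1 / N) • Real.negMulLog (lam i)
      = (1 / N) * ∑ i ∈ I, Real.negMulLog (lam i) := by
    simp only [smul_eq_mul, ← Finset.mul_sum]
  rw [hsum1, hsum2] at jensen
  have step1 : ∑ i ∈ I, hEnt (lam i) ≤ N * hEnt (s / N) := by
    rw [hEnt_eq]
    calc ∑ i ∈ I, Real.negMulLog (lam i)
        = N * ((1 / N) * ∑ i ∈ I, Real.negMulLog (lam i)) := by
          field_simp
      _ ≤ N * Real.negMulLog (s / N) := by
          exact mul_le_mul_of_nonneg_left jensen (le_of_lt hNpos)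
  have hmem1 : s / N ∈ Set.Icc (0:ℝ) (Real.exp (-1)) := by
    constructor
    · positivity
    · refine le_trans ?_ exp_neg_one_ge
      rw [div_le_div_iff₀ hNpos (by norm_num : (0:ℝ) < 3)]
      nlinarith
  have hmem2 : γ / N ∈ Set.Icc (0:ℝ) (Real.exp (-1)) := by
    constructor
    · positivity
    · refine le_trans ?_ exp_neg_one_ge
      rw [div_le_div_iff₀ hNpos (by norm_num : (0:ℝ) < 3)]
      nlinarith
  have step2 : N * hEnt (s / N) ≤ N * hEnt (γ / N) := by
    apply mul_le_mul_of_nonneg_left _ (le_of_lt hNpos)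
    exact hEnt_monoOn hmem1 hmem2 (by gcongr)
  have step3 : N * hEnt (γ / N) = γ * Real.log N + hEnt γ := by
    rcases eq_or_lt_of_le hγ0 with h | hγpos
    · simp [hEnt, ← h]
    · unfold hEnt
      rw [one_div (γ / N), one_div γ, Real.log_inv, Real.log_inv,
        Real.log_div (ne_of_gt hγpos) (ne_of_gt hNpos)]
      field_simp
      ring
  calc ∑ i ∈ I, hEnt (lam i) ≤ N * hEnt (s / N) := step1
    _ ≤ N * hEnt (γ / N) := step2
    _ = γ * Real.log N + hEnt γ := step3

set_option maxHeartbeats 1000000 in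
/-- Entropy bound from partial sums: if `λ ∈ [0,1]^ℕ` with `Σ λ_i ≤ 1` and
`I_0, I_1, …` is a partition of the index set into finite sets with `|I_n| ≥ 3` and
`Σ_{i ∈ I_n} λ_i ≤ γ_n ∈ [0,1]` for `n ≥ 1`, then
`S(Λ) ≤ log|I_0| + Σ_{n≥1} γ_n log|I_n| + Σ_{n≥1} h(γ_n)` (as extended reals). -/
theorem entropy_decomposition_bound (lam : ℕ → ℝ)
    (hlam : ∀ i, lam i ∈ Set.Icc (0 : ℝ) 1) (hsummable : Summable lam)
    (hsum : ∑' i, lam i ≤ 1)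
    (I : ℕ → Finset ℕ) (hdisj : ∀ n m, n ≠ m → Disjoint (I n) (I m))
    (hcover : ∀ i : ℕ, ∃ n, i ∈ I n) (hcard : ∀ n, 3 ≤ (I n).card)
    (γ : ℕ → ℝ) (hγ : ∀ n, 1 ≤ n → γ n ∈ Set.Icc (0 : ℝ) 1)
    (hγsum : ∀ n, 1 ≤ n → ∑ i ∈ I n, lam i ≤ γ n) :
    ∑' i, ENNReal.ofReal (hEnt (lam i)) ≤
      ENNReal.ofReal (Real.log ((I 0).card : ℝ)) +
      ∑' n : ℕ, ENNReal.ofReal (γ (n + 1) * Real.log (((I (n + 1)).card : ℝ))) +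
      ∑' n : ℕ, ENNReal.ofReal (hEnt (γ (n + 1))) := by
  set f : ℕ → ENNReal := fun i => ENNReal.ofReal (hEnt (lam i)) with hf
  -- partition the tsum
  have hbij : Function.Bijective (fun p : (Σ n : ℕ, (I n : Finset ℕ)) => (p.2 : ℕ)) := by
    constructor
    · rintro ⟨n, i, hi⟩ ⟨m, j, hj⟩ h
      simp only at h
      subst h
      have hnm : n = m := by
        by_contra hne
        exact (Finset.disjoint_left.mp (hdisj n m hne)) hi hj
      subst hnm
      rfl
    · intro i
      obtain ⟨n, hn⟩ := hcover i
      exact ⟨⟨n, i, hn⟩, rfl⟩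
  have hpart : ∑' i, f i = ∑' n : ℕ, ∑ i ∈ I n, f i := by
    rw [← (Equiv.ofBijective _ hbij).tsum_eq f, ENNReal.tsum_sigma']
    exact tsum_congr fun n => Finset.tsum_subtype (I n) f
  have hg0 : ∑ i ∈ I 0, f i ≤ ENNReal.ofReal (Real.log ((I 0).card : ℝ)) := by
    rw [hf, ← ENNReal.ofReal_sum_of_nonneg (fun i _ => hEnt_nonneg (hlam i).1 (hlam i).2)]
    apply ENNReal.ofReal_le_ofReal
    have h1 : ∑ i ∈ I 0, lam i ≤ 1 :=
      le_trans (Summable.sum_le_tsum (I 0) (fun i _ => (hlam i).1) hsummable) hsum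
    have := key_bound (I 0) (hcard 0) lam (fun i _ => (hlam i).1) le_rfl h1
    simpa [hEnt] using this
  have hgn : ∀ n : ℕ, ∑ i ∈ I (n+1), f i ≤
      ENNReal.ofReal (γ (n + 1) * Real.log (((I (n + 1)).card : ℝ))) +
      ENNReal.ofReal (hEnt (γ (n + 1))) := by
    intro n
    rw [hf, ← ENNReal.ofReal_sum_of_nonneg (fun i _ => hEnt_nonneg (hlam i).1 (hlam i).2)]
    refine le_trans (ENNReal.ofReal_le_ofReal ?_) (ENNReal.ofReal_add_le)
    exact key_bound (I (n+1)) (hcard (n+1)) lam (fun i _ => (hlam i).1)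
      (hγ (n+1) (by omega)).2 (hγsum (n+1) (by omega))
  have hsplit : ∑' n : ℕ, ∑ i ∈ I n, f i
      = (∑ i ∈ I 0, f i) + ∑' n : ℕ, ∑ i ∈ I (n+1), f i :=
    tsum_eq_zero_add' ENNReal.summable
  have h2 : ∑' n : ℕ, ∑ i ∈ I (n+1), f i ≤
      ∑' n : ℕ, (ENNReal.ofReal (γ (n + 1) * Real.log (((I (n + 1)).card : ℝ))) +
        ENNReal.ofReal (hEnt (γ (n + 1)))) := ENNReal.tsum_le_tsum hgn
  rw [ENNReal.tsum_add] at h2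
  calc ∑' i, f i = (∑ i ∈ I 0, f i) + ∑' n : ℕ, ∑ i ∈ I (n+1), f i := by
        rw [hpart, hsplit]
    _ ≤ ENNReal.ofReal (Real.log ((I 0).card : ℝ)) +
        (∑' n : ℕ, ENNReal.ofReal (γ (n + 1) * Real.log (((I (n + 1)).card : ℝ))) +
        ∑' n : ℕ, ENNReal.ofReal (hEnt (γ (n + 1)))) := add_le_add hg0 h2
    _ = _ := by rw [add_assoc]
end
end
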